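/- arXiv:1811.05574 — 2 statements merged into one kernel-verified Lean document; each statement's English description precedes it below -/
import Mathlib

section
/- Let F₀ ⊆ (ℕ → ℕ) be countable and let f* : (ℕ → {0,1}) → (ℕ → ℕ) be continuous such that for every x in Cantor space, f*(x) is eventually different from every function in F₀. Then there exist h : ℕ → ℕ and a nonempty perfect subset P of Cantor space such that h is eventually different from every function in F₀, but for every x ∈ P, h is not eventually different from f*(x). -/
def EvDiff (f g : ℕ → ℕ) : Prop := ∃ n : ℕ, ∀ m : ℕ, n ≤ m → f m ≠ g m

/-
The perfect set is `P = {z | z n = false for n ∉ range q}` for a sparse sequence of free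
coordinates `q 0 < q 1 < ⋯`, built block by block: block `k` is `[M k, M (k + 1))` and ends with
`q k`. Only the finitely many points vanishing from `M k` on matter in block `k`: each of their
images under `f` eventually avoids the first `k` members of `F₀`, so `h` can copy each of them at
one late position and avoid those `k` functions everywhere else. By continuity, the copied values
depend only on coordinates below `q k`, where every `z ∈ P` agrees with one of these points.
-/

open Filter Set Function PiNat Topology

theorem evDiff_iff_eventually {f g : ℕ → ℕ} : EvDiff f g ↔ ∀ᶠ m in atTop, f m ≠ g m :=
  eventually_atTop.symm

theorem exists_avoiding_and_hitting {ι : Type*} {𝒢 : Set (ℕ → ℕ)} (h𝒢 : 𝒢.Finite)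
    (φ : ι → ℕ → ℕ) (s : Finset ι) (hφ : ∀ i ∈ s, ∀ g ∈ 𝒢, EvDiff (φ i) g) (M : ℕ) :
    ∃ H : ℕ → ℕ, (∀ m ≥ M, ∀ g ∈ 𝒢, H m ≠ g m) ∧
      ∃ M', ∀ i ∈ s, ∃ m ∈ Ico M M', H m = φ i m := by
  classical
  induction s using Finset.induction_on with
  | empty =>
    choose H hH using fun m => (h𝒢.image fun g => g m).exists_notMem
    exact ⟨H, fun m _ g hg => fun h => hH m ⟨g, hg, h.symm⟩, M, by simp⟩
  | insert i s _ ih =>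
    obtain ⟨H, hH, M₁, hhit⟩ := ih fun j hj => hφ j (Finset.mem_insert_of_mem hj)
    have hT : ∀ᶠ m in atTop, ∀ g ∈ 𝒢, φ i m ≠ g m :=
      (eventually_all_finite h𝒢).2 fun g hg =>
        evDiff_iff_eventually.1 (hφ i (Finset.mem_insert_self i s) g hg)
    obtain ⟨m₀, hm₀, hm₀M⟩ := (hT.and (eventually_ge_atTop (max M M₁))).exists
    refine ⟨update H m₀ (φ i m₀), fun m hm g hg => ?_, m₀ + 1, ?_⟩
    · rcases eq_or_ne m m₀ with rfl | hne
      · simpa using hm₀ g hg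
      · simpa [hne] using hH m hm g hg
    · simp only [Finset.forall_mem_insert]
      refine ⟨⟨m₀, ⟨le_of_max_le_left hm₀M, m₀.lt_succ_self⟩, by simp⟩, fun j hj => ?_⟩
      obtain ⟨m, hm, hHm⟩ := hhit j hj
      have hlt : m < m₀ := hm.2.trans_le (le_of_max_le_right hm₀M)
      exact ⟨m, ⟨hm.1, hlt.trans m₀.lt_succ_self⟩, by simpa [hlt.ne] using hHm⟩

theorem eventually_cylinder_subset {E : ℕ → Type*} [∀ n, TopologicalSpace (E n)]
    {y : ∀ n, E n} {U : Set (∀ n, E n)} (hU : U ∈ 𝓝 y) : ∀ᶠ N in atTop, cylinder y N ⊆ U := by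
  rw [nhds_pi, Filter.mem_pi] at hU
  obtain ⟨I, hI, t, ht, hIU⟩ := hU
  obtain ⟨N, hN⟩ := hI.bddAbove
  filter_upwards [eventually_gt_atTop N] with n hn z hz
  exact hIU fun i hi => (hz i ((hN hi).trans_lt hn)) ▸ mem_of_mem_nhds (ht i)

theorem finite_setOf_forall_le_eq {α : Type*} [Finite α] (a : α) (M : ℕ) :
    {y : ℕ → α | ∀ n, M ≤ n → y n = a}.Finite := by
  refine Finite.of_finite_image (f := fun y (i : Fin M) => y i) (toFinite _) ?_
  intro y₁ hy₁ y₂ hy₂ h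
  funext n
  by_cases hn : n < M
  · exact congrFun h ⟨n, hn⟩
  · rw [hy₁ n (not_lt.1 hn), hy₂ n (not_lt.1 hn)]

theorem perfect_setOf_forall_notMem_eq {ι α : Type*} [TopologicalSpace α] [T1Space α]
    [Nontrivial α] {D : Set ι} (hD : D.Infinite) (a : α) :
    Perfect {z : ι → α | ∀ n ∉ D, z n = a} := by
  classical
  refine ⟨?_, preperfect_iff_nhds.2 fun z hz U hU => ?_⟩
  · simp only [ofPred_forall]
    exact isClosed_iInter fun n => isClosed_iInter fun _ =>
      isClosed_singleton.preimage (continuous_apply n)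
  · rw [nhds_pi, Filter.mem_pi] at hU
    obtain ⟨I, hI, t, ht, hIU⟩ := hU
    obtain ⟨n, hnD, hnI⟩ := (hD.sdiff hI).nonempty
    obtain ⟨b, hb⟩ := exists_ne (z n)
    refine ⟨update z n b, ⟨hIU fun i hi => ?_, fun i hi => ?_⟩,
      fun h => hb (by simpa using congrFun h n)⟩
    · rw [update_of_ne (ne_of_mem_of_not_mem hi hnI)]
      exact mem_of_mem_nhds (ht i)
    · rw [update_of_ne (ne_of_mem_of_not_mem hnD hi).symm]
      exact hz i hi

theorem StrictMono.exists_mem_Ico {M : ℕ → ℕ} (hM : StrictMono M) (h0 : M 0 = 0) (m : ℕ) :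
    ∃ k, m ∈ Ico (M k) (M (k + 1)) := by
  classical
  refine ⟨Nat.findGreatest (fun k => M k ≤ m) m, Nat.findGreatest_spec (P := fun k => M k ≤ m)
    (Nat.zero_le m) (h0.trans_le (Nat.zero_le m)), ?_⟩
  by_contra! h
  exact (Nat.le_findGreatest ((hM.id_le _).trans h) h).not_gt (Nat.lt_succ_self _)

theorem exists_eq_on_Ico_blocks {M : ℕ → ℕ} (hM : StrictMono M) (h0 : M 0 = 0)
    (H : ℕ → ℕ → ℕ) : ∃ h : ℕ → ℕ, ∀ k, ∀ m ∈ Ico (M k) (M (k + 1)), h m = H k m := by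
  choose blk hblk using hM.exists_mem_Ico h0
  refine ⟨fun m => H (blk m) m, fun k m hm => ?_⟩
  have h₁ := hM.lt_iff_lt.1 ((hblk m).1.trans_lt hm.2)
  have h₂ := hM.lt_iff_lt.1 (hm.1.trans_lt (hblk m).2)
  exact congrArg (H · m) (show blk m = k by omega)

theorem notMem_range_of_mem_Ico {M q : ℕ → ℕ} (hM : Monotone M)
    (hq : ∀ k, q k ∈ Ico (M k) (M (k + 1))) {k i : ℕ} (hi : i ∈ Ico (M k) (q k)) :
    i ∉ range q := by
  rintro ⟨j, rfl⟩
  rcases lt_trichotomy j k with hjk | rfl | hkj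
  · exact (hq j).2.not_ge ((hM hjk).trans hi.1)
  · exact hi.2.false
  · exact hi.2.not_ge ((hq k).2.le.trans ((hM hkj).trans (hq j).1))

theorem exists_block_avoiding_and_hitting {f : (ℕ → Bool) → ℕ → ℕ} (hf : Continuous f)
    {𝒢 : Set (ℕ → ℕ)} (h𝒢 : 𝒢.Finite) (hed : ∀ x, ∀ g ∈ 𝒢, EvDiff (f x) g) (M : ℕ) :
    ∃ H : ℕ → ℕ, (∀ m ≥ M, ∀ g ∈ 𝒢, H m ≠ g m) ∧ ∃ M' ≥ M, ∀ z : ℕ → Bool,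
      (∀ n ∈ Ico M M', z n = false) → ∃ m ∈ Ico M M', f z m = H m := by
  let Y := {y : ℕ → Bool | ∀ n, M ≤ n → y n = false}
  have hY : Y.Finite := finite_setOf_forall_le_eq false M
  obtain ⟨H, hH, M₁, hhit⟩ :=
    exists_avoiding_and_hitting h𝒢 f hY.toFinset (fun y _ => hed y) M
  have hconst : ∀ᶠ N in atTop, ∀ y ∈ Y, ∀ m ∈ Iio M₁, cylinder y N ⊆ {z | f z m = f y m} := by
    refine (eventually_all_finite hY).2 fun y _ => (eventually_all_finite (finite_Iio M₁)).2
      fun m _ => eventually_cylinder_subset ?_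
    have := ((continuous_apply m).comp hf).tendsto y
    rw [nhds_discrete ℕ] at this
    exact tendsto_pure.1 this
  obtain ⟨M', hM'const, hM'⟩ := (hconst.and (eventually_ge_atTop (max M M₁))).exists
  refine ⟨H, hH, M', le_of_max_le_left hM', fun z hz => ?_⟩
  set y : ℕ → Bool := fun n => if n < M then z n else false
  have hy : y ∈ Y := fun n hn => if_neg (not_lt.2 hn)
  have hzy : z ∈ cylinder y M' := fun n hn => by
    by_cases hnM : n < M
    · simp [y, hnM]
    · simp [y, hnM, hz n ⟨not_lt.1 hnM, hn⟩]
  obtain ⟨m, hm, hHm⟩ := hhit y (hY.mem_toFinset.2 hy)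
  exact ⟨m, ⟨hm.1, hm.2.trans_le (le_of_max_le_right hM')⟩,
    (hM'const y hy m hm.2 hzy).trans hHm.symm⟩

theorem stmt10 (F₀ : Set (ℕ → ℕ)) (hc : F₀.Countable)
    (f : (ℕ → Bool) → (ℕ → ℕ)) (hf : Continuous f)
    (hed : ∀ x : ℕ → Bool, ∀ g ∈ F₀, EvDiff (f x) g) :
    ∃ (h : ℕ → ℕ) (P : Set (ℕ → Bool)), P.Nonempty ∧ Perfect P ∧
      (∀ g ∈ F₀, EvDiff h g) ∧ ∀ x ∈ P, ¬ EvDiff h (f x) := by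
  obtain ⟨G, hG⟩ := countable_iff_exists_subset_range.1 hc
  have hfin (k : ℕ) : (F₀ ∩ G '' Iic k).Finite := ((finite_Iic k).image G).inter_of_right F₀
  choose H hH M' hM' hhit using fun k =>
    exists_block_avoiding_and_hitting hf (hfin k) fun x g hg => hed x g hg.1
  let M : ℕ → ℕ := fun k => Nat.rec 0 (fun k Mk => M' k Mk + 1) k
  let q : ℕ → ℕ := fun k => M' k (M k)
  have hq (k : ℕ) : q k ∈ Ico (M k) (M (k + 1)) := ⟨hM' k (M k), (q k).lt_succ_self⟩
  have hM : StrictMono M := strictMono_nat_of_lt_succ fun k => (hq k).1.trans_lt (hq k).2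
  have hq_mono : StrictMono q :=
    strictMono_nat_of_lt_succ fun k => (hq k).2.trans_le (hq (k + 1)).1
  obtain ⟨h, hh⟩ := exists_eq_on_Ico_blocks hM rfl fun k => H k (M k)
  refine ⟨h, {z | ∀ n ∉ range q, z n = false}, ⟨fun _ => false, fun _ _ => rfl⟩,
    perfect_setOf_forall_notMem_eq (infinite_range_of_injective hq_mono.injective) false, ?_, ?_⟩
  · intro g hg
    obtain ⟨j, rfl⟩ := hG hg
    refine ⟨M j, fun m hjm => ?_⟩
    obtain ⟨k, hk⟩ := hM.exists_mem_Ico rfl m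
    have hjk : j ≤ k := Nat.lt_succ_iff.1 (hM.lt_iff_lt.1 (hjm.trans_lt hk.2))
    rw [hh k m hk]
    exact hH k (M k) m hk.1 _ ⟨hg, j, hjk, rfl⟩
  · rintro z hz ⟨n, hn⟩
    obtain ⟨m, hm, hfm⟩ :=
      hhit n (M n) z fun i hi => hz i (notMem_range_of_mem_Ico hM.monotone hq hi)
    have hhm : h m = H n (M n) m := hh n m ⟨hm.1, hm.2.trans (hq n).2⟩
    exact hn m ((hM.id_le n).trans hm.1) (hhm.trans hfm.symm)
end

section
/- For every perfect subtree p of 2^{<ω}, there is an order-preserving (with respect to strict lexicographic order) bijection from the branches [p] of p onto Cantor space ℕ → {0,1}. -/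
def bres (x : ℕ → Bool) (n : ℕ) : List Bool := List.ofFn fun i : Fin n => x i.1

def PerfectTree (p : Set (List Bool)) : Prop :=
  p.Nonempty ∧ (∀ s ∈ p, ∀ t : List Bool, t <+: s → t ∈ p) ∧
    ∀ s ∈ p, ∃ t₁ ∈ p, ∃ t₂ ∈ p, s <+: t₁ ∧ s <+: t₂ ∧ ¬ t₁ <+: t₂ ∧ ¬ t₂ <+: t₁

def branches (p : Set (List Bool)) : Set (ℕ → Bool) := {x | ∀ n, bres x n ∈ p}

/-- The strict lexicographic order on Cantor space: `x` and `y` first differ at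
coordinate `n`, where `x` takes value `false` and `y` value `true`. -/
def cantorLexLt (x y : ℕ → Bool) : Prop :=
  ∃ n : ℕ, (∀ m, m < n → x m = y m) ∧ x n = false ∧ y n = true

/-!
Splitting nodes of a perfect tree `p` form a copy of the full binary tree: from any node of `p`
go up to the first splitting node above it, and from a splitting node `t` pass to the first
splitting node above `t ++ [b]`. Reading a point `a` of Cantor space as a sequence of such
left/right choices yields a branch of `p`, and this map is strictly monotone for the
lexicographic orders. Since splitting nodes are chosen of minimal length, every branch arises
this way: the first splitting node above an initial segment of a branch is again an initial
segment of it. A strictly monotone map out of a linear order is injective, so its inverse on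
`[p]` is the required bijection.
-/

open Function

theorem List.exists_fork_of_not_prefix {α : Type*} :
    ∀ {l₁ l₂ : List α}, ¬ l₁ <+: l₂ → ¬ l₂ <+: l₁ →
      ∃ r a b, a ≠ b ∧ r ++ [a] <+: l₁ ∧ r ++ [b] <+: l₂
  | [], _, h₁, _ => absurd (List.nil_prefix) h₁
  | _ :: _, [], _, h₂ => absurd (List.nil_prefix) h₂
  | c :: l₁, d :: l₂, h₁, h₂ => by
    by_cases hcd : c = d
    · subst hcd
      simp only [List.cons_prefix_cons, true_and] at h₁ h₂
      obtain ⟨r, a, b, hab, ha, hb⟩ := exists_fork_of_not_prefix h₁ h₂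
      exact ⟨c :: r, a, b, hab, by simpa using ha, by simpa using hb⟩
    · exact ⟨[], c, d, hcd, by simp, by simp⟩

theorem Function.Injective.bijOn_invFun_range {α β : Type*} [Nonempty α] {f : α → β}
    (hf : Injective f) : Set.BijOn (invFun f) (Set.range f) Set.univ :=
  Set.InvOn.bijOn ⟨fun _ hy => invFun_eq hy, fun a _ => leftInverse_invFun hf a⟩
    (Set.mapsTo_univ _ _) fun a _ => Set.mem_range_self a

section InitialSegments

variable {x y : ℕ → Bool} {m n : ℕ} {u v : List Bool}

theorem bres_eq_map_range (x : ℕ → Bool) (n : ℕ) : bres x n = (List.range n).map x := by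
  rw [bres, List.ofFn_eq_map, ← List.map_coe_finRange_eq_range, List.map_map]
  rfl

@[simp]
theorem length_bres (x : ℕ → Bool) (n : ℕ) : (bres x n).length = n := by
  simp [bres_eq_map_range]

@[simp]
theorem getElem_bres (x : ℕ → Bool) {n i : ℕ} (h : i < (bres x n).length) :
    (bres x n)[i] = x i := by
  simp [bres_eq_map_range]

theorem bres_succ (x : ℕ → Bool) (n : ℕ) : bres x (n + 1) = bres x n ++ [x n] := by
  simp [bres_eq_map_range, List.range_succ]

theorem take_bres (x : ℕ → Bool) (m n : ℕ) : (bres x n).take m = bres x (min m n) := by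
  simp [bres_eq_map_range, ← List.map_take, List.take_range]

theorem bres_eq_bres_iff : bres x n = bres y n ↔ ∀ m < n, x m = y m := by
  simp [bres_eq_map_range, List.map_inj_left]

theorem bres_prefix_bres (x : ℕ → Bool) (h : m ≤ n) : bres x m <+: bres x n := by
  rw [List.prefix_iff_eq_take, take_bres, length_bres, min_eq_left h]

theorem bres_length_eq_of_prefix (hv : bres x v.length = v) (huv : u <+: v) :
    bres x u.length = u := by
  have := congrArg (List.take u.length) hv
  rwa [take_bres, min_eq_left huv.length_le, ← List.prefix_iff_eq_take.1 huv] at this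

theorem cantorLexLt_of_bres (hx : bres x (u.length + 1) = u ++ [false])
    (hy : bres y (u.length + 1) = u ++ [true]) : cantorLexLt x y := by
  rw [bres_succ] at hx hy
  obtain ⟨hxu, hxn⟩ := List.append_inj' hx rfl
  obtain ⟨hyu, hyn⟩ := List.append_inj' hy rfl
  exact ⟨u.length, bres_eq_bres_iff.1 (hxu.trans hyu.symm), List.singleton_inj.1 hxn,
    List.singleton_inj.1 hyn⟩

end InitialSegments

theorem cantorLexLt_iff_toLex_lt {x y : ℕ → Bool} : cantorLexLt x y ↔ toLex x < toLex y := by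
  simp only [cantorLexLt, ← Bool.lt_iff]
  rfl

section LexMonotone

variable {f : (ℕ → Bool) → ℕ → Bool}

theorem strictMono_toLex_comp_ofLex (hf : ∀ a b, cantorLexLt a b → cantorLexLt (f a) (f b)) :
    StrictMono (toLex ∘ f ∘ ofLex) := fun _ _ h =>
  cantorLexLt_iff_toLex_lt.1 (hf _ _ (cantorLexLt_iff_toLex_lt.2 h))

theorem cantorLexLt_map_iff (hf : ∀ a b, cantorLexLt a b → cantorLexLt (f a) (f b))
    {a b : ℕ → Bool} : cantorLexLt (f a) (f b) ↔ cantorLexLt a b :=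
  cantorLexLt_iff_toLex_lt.trans <|
    ((strictMono_toLex_comp_ofLex hf).lt_iff_lt (a := toLex a) (b := toLex b)).trans
      cantorLexLt_iff_toLex_lt.symm

theorem injective_of_cantorLexLt_map (hf : ∀ a b, cantorLexLt a b → cantorLexLt (f a) (f b)) :
    Injective f := fun _ _ h =>
  toLex.injective ((strictMono_toLex_comp_ofLex hf).injective (congrArg toLex h))

end LexMonotone

section SplittingNodes

variable {p : Set (List Bool)}

def IsSplitting (p : Set (List Bool)) (t : List Bool) : Prop :=
  ∀ b : Bool, t ++ [b] ∈ p

theorem isSplitting_of_ne {r : List Bool} {a b : Bool} (ha : r ++ [a] ∈ p) (hb : r ++ [b] ∈ p)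
    (hab : a ≠ b) : IsSplitting p r := by
  intro c
  cases a <;> cases b <;> cases c <;> simp_all

theorem exists_isSplitting_of_not_prefix (hpc : ∀ s ∈ p, ∀ t : List Bool, t <+: s → t ∈ p)
    {s t₁ t₂ : List Bool} (h₁ : t₁ ∈ p) (h₂ : t₂ ∈ p) (hs₁ : s <+: t₁) (hs₂ : s <+: t₂)
    (h₁₂ : ¬ t₁ <+: t₂) (h₂₁ : ¬ t₂ <+: t₁) :
    ∃ r, s <+: r ∧ r.length < t₁.length ∧ IsSplitting p r := by
  obtain ⟨w₁, rfl⟩ := hs₁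
  obtain ⟨w₂, rfl⟩ := hs₂
  rw [List.prefix_append_right_inj] at h₁₂ h₂₁
  obtain ⟨r, a, b, hab, ha, hb⟩ := List.exists_fork_of_not_prefix h₁₂ h₂₁
  rw [← List.prefix_append_right_inj s, ← List.append_assoc] at ha hb
  refine ⟨s ++ r, List.prefix_append s r, ?_,
    isSplitting_of_ne (hpc _ h₁ _ ha) (hpc _ h₂ _ hb) hab⟩
  simpa using ha.length_le

theorem PerfectTree.nil_mem (hp : PerfectTree p) : [] ∈ p :=
  hp.2.1 _ hp.1.some_mem [] List.nil_prefix

theorem PerfectTree.exists_isSplitting (hp : PerfectTree p) {s : List Bool} (hs : s ∈ p) :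
    ∃ t, s <+: t ∧ IsSplitting p t := by
  obtain ⟨t₁, h₁, t₂, h₂, hs₁, hs₂, h₁₂, h₂₁⟩ := hp.2.2 s hs
  obtain ⟨r, hsr, -, hr⟩ := exists_isSplitting_of_not_prefix hp.2.1 h₁ h₂ hs₁ hs₂ h₁₂ h₂₁
  exact ⟨r, hsr, hr⟩

open Classical in
noncomputable def firstSplitting (p : Set (List Bool)) (s : List Bool) : List Bool :=
  if h : {t | s <+: t ∧ IsSplitting p t}.Nonempty then argminOn List.length _ h else s

theorem PerfectTree.firstSplitting_spec (hp : PerfectTree p) {s : List Bool} (hs : s ∈ p) :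
    s <+: firstSplitting p s ∧ IsSplitting p (firstSplitting p s) := by
  have h : {t | s <+: t ∧ IsSplitting p t}.Nonempty := hp.exists_isSplitting hs
  rw [firstSplitting, dif_pos h]
  exact argminOn_mem _ _ h

theorem length_firstSplitting_le {s u : List Bool} (hsu : s <+: u) (hu : IsSplitting p u) :
    (firstSplitting p s).length ≤ u.length := by
  have h : {t | s <+: t ∧ IsSplitting p t}.Nonempty := ⟨u, hsu, hu⟩
  rw [firstSplitting, dif_pos h]
  exact argminOn_le List.length {t | s <+: t ∧ IsSplitting p t} ⟨hsu, hu⟩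

theorem PerfectTree.bres_firstSplitting (hp : PerfectTree p) {x : ℕ → Bool}
    (hx : x ∈ branches p) {s : List Bool} (hs : bres x s.length = s) :
    bres x (firstSplitting p s).length = firstSplitting p s := by
  set t := firstSplitting p s
  obtain ⟨hst, ht⟩ := hp.firstSplitting_spec (hs ▸ hx s.length)
  -- were `t` not on `x`, the node where they part would be a shorter splitting node above `s`
  by_contra hne
  have hsx : s <+: bres x t.length := hs ▸ bres_prefix_bres x hst.length_le
  have hxt : ¬ bres x t.length <+: t := fun h => hne (h.eq_of_length (length_bres _ _))
  have htx : ¬ t <+: bres x t.length := fun h => hne (h.eq_of_length (length_bres _ _).symm).symm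
  obtain ⟨r, hsr, hrt, hr⟩ := exists_isSplitting_of_not_prefix hp.2.1 (hx t.length)
    (hp.2.1 _ (ht false) t (List.prefix_append _ _)) hsx hst hxt htx
  exact absurd (length_firstSplitting_le hsr hr) (by simpa using hrt)

end SplittingNodes

section CodedBranch

variable {p : Set (List Bool)}

noncomputable def splitNode (p : Set (List Bool)) (a : ℕ → Bool) : ℕ → List Bool
  | 0 => firstSplitting p []
  | n + 1 => firstSplitting p (splitNode p a n ++ [a n])

theorem splitNode_congr {a b : ℕ → Bool} :
    ∀ {n}, (∀ m < n, a m = b m) → splitNode p a n = splitNode p b n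
  | 0, _ => rfl
  | n + 1, h => by
    rw [splitNode, splitNode, splitNode_congr fun m hm => h m (by omega), h n n.lt_succ_self]

theorem PerfectTree.isSplitting_splitNode (hp : PerfectTree p) (a : ℕ → Bool) :
    ∀ n, IsSplitting p (splitNode p a n)
  | 0 => (hp.firstSplitting_spec hp.nil_mem).2
  | n + 1 => (hp.firstSplitting_spec (hp.isSplitting_splitNode a n (a n))).2

theorem PerfectTree.append_prefix_splitNode_succ (hp : PerfectTree p) (a : ℕ → Bool) (n : ℕ) :
    splitNode p a n ++ [a n] <+: splitNode p a (n + 1) :=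
  (hp.firstSplitting_spec (hp.isSplitting_splitNode a n (a n))).1

theorem PerfectTree.splitNode_prefix (hp : PerfectTree p) (a : ℕ → Bool) {m n : ℕ}
    (h : m ≤ n) : splitNode p a m <+: splitNode p a n := by
  induction n, h using Nat.le_induction with
  | base => exact List.prefix_rfl
  | succ n _ ih =>
    exact ih.trans ((List.prefix_append _ _).trans (hp.append_prefix_splitNode_succ a n))

theorem PerfectTree.le_length_splitNode (hp : PerfectTree p) (a : ℕ → Bool) :
    ∀ n, n ≤ (splitNode p a n).length
  | 0 => Nat.zero_le _
  | n + 1 => by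
    have h := (hp.append_prefix_splitNode_succ a n).length_le
    rw [List.length_append, List.length_singleton] at h
    exact (Nat.succ_le_succ (hp.le_length_splitNode a n)).trans h

noncomputable def codedBranch (p : Set (List Bool)) (a : ℕ → Bool) (i : ℕ) : Bool :=
  (splitNode p a (i + 1)).getD i false

theorem PerfectTree.bres_codedBranch (hp : PerfectTree p) (a : ℕ → Bool) (n : ℕ) :
    bres (codedBranch p a) (splitNode p a n).length = splitNode p a n := by
  refine List.ext_getElem (length_bres _ _) fun i hi hi' => ?_
  have hi₁ : i < (splitNode p a (i + 1)).length :=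
    (Nat.lt_succ_self i).trans_le (hp.le_length_splitNode a _)
  rw [getElem_bres, codedBranch, List.getD_eq_getElem _ _ hi₁]
  rcases le_total n (i + 1) with h | h
  · exact ((hp.splitNode_prefix a h).getElem hi').symm
  · exact (hp.splitNode_prefix a h).getElem hi₁

theorem PerfectTree.codedBranch_mem_branches (hp : PerfectTree p) (a : ℕ → Bool) :
    codedBranch p a ∈ branches p := fun n =>
  hp.2.1 _ (hp.2.1 _ (hp.isSplitting_splitNode a n false) _ (List.prefix_append _ _)) _
    (hp.bres_codedBranch a n ▸ bres_prefix_bres _ (hp.le_length_splitNode a n))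

theorem PerfectTree.codedBranch_lt (hp : PerfectTree p) {a b : ℕ → Bool}
    (h : cantorLexLt a b) : cantorLexLt (codedBranch p a) (codedBranch p b) := by
  obtain ⟨n, hab, ha, hb⟩ := h
  have hnode : splitNode p a n = splitNode p b n := splitNode_congr hab
  have ha' := bres_length_eq_of_prefix (hp.bres_codedBranch a (n + 1))
    (hp.append_prefix_splitNode_succ a n)
  have hb' := bres_length_eq_of_prefix (hp.bres_codedBranch b (n + 1))
    (hp.append_prefix_splitNode_succ b n)
  rw [ha] at ha'
  rw [hb, ← hnode] at hb'
  rw [List.length_append, List.length_singleton] at ha' hb'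
  exact cantorLexLt_of_bres ha' hb'

noncomputable def branchNode (p : Set (List Bool)) (x : ℕ → Bool) : ℕ → List Bool
  | 0 => firstSplitting p []
  | n + 1 => firstSplitting p (branchNode p x n ++ [x (branchNode p x n).length])

noncomputable def branchCode (p : Set (List Bool)) (x : ℕ → Bool) (n : ℕ) : Bool :=
  x (branchNode p x n).length

theorem splitNode_branchCode (x : ℕ → Bool) : splitNode p (branchCode p x) = branchNode p x := by
  funext n
  induction n with
  | zero => rfl
  | succ n ih => rw [splitNode, branchNode, ih, branchCode]

theorem PerfectTree.bres_branchNode (hp : PerfectTree p) {x : ℕ → Bool} (hx : x ∈ branches p) :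
    ∀ n, bres x (branchNode p x n).length = branchNode p x n
  | 0 => hp.bres_firstSplitting hx rfl
  | n + 1 => hp.bres_firstSplitting hx <| by
    rw [List.length_append, List.length_singleton, bres_succ, hp.bres_branchNode hx n]

theorem PerfectTree.codedBranch_branchCode (hp : PerfectTree p) {x : ℕ → Bool}
    (hx : x ∈ branches p) : codedBranch p (branchCode p x) = x := by
  funext i
  have hN : splitNode p (branchCode p x) (i + 1) = branchNode p x (i + 1) := by
    rw [splitNode_branchCode]
  have h : bres (codedBranch p (branchCode p x)) (branchNode p x (i + 1)).length =
      bres x (branchNode p x (i + 1)).length := by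
    rw [← hN, hp.bres_codedBranch, hN, hp.bres_branchNode hx]
  exact bres_eq_bres_iff.1 h i (hN ▸ hp.le_length_splitNode _ (i + 1))

theorem PerfectTree.range_codedBranch (hp : PerfectTree p) :
    Set.range (codedBranch p) = branches p :=
  Set.Subset.antisymm (Set.range_subset_iff.2 hp.codedBranch_mem_branches)
    fun x hx => ⟨branchCode p x, hp.codedBranch_branchCode hx⟩

end CodedBranch

theorem stmt14 (p : Set (List Bool)) (hp : PerfectTree p) :
    ∃ e : (ℕ → Bool) → (ℕ → Bool),
      Set.BijOn e (branches p) Set.univ ∧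
      ∀ x ∈ branches p, ∀ y ∈ branches p, cantorLexLt x y → cantorLexLt (e x) (e y) := by
  have hlt : ∀ a b, cantorLexLt a b → cantorLexLt (codedBranch p a) (codedBranch p b) :=
    fun _ _ => hp.codedBranch_lt
  have hinj := injective_of_cantorLexLt_map hlt
  refine ⟨invFun (codedBranch p), ?_, ?_⟩
  · rw [← hp.range_codedBranch]
    exact hinj.bijOn_invFun_range
  · rw [← hp.range_codedBranch]
    rintro _ ⟨a, rfl⟩ _ ⟨b, rfl⟩ h
    rwa [leftInverse_invFun hinj a, leftInverse_invFun hinj b, ← cantorLexLt_map_iff hlt]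
end
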